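/- arXiv:1910.10364 — 5 statements merged into one kernel-verified Lean document; each statement's English description precedes it below -/
import Mathlib

section
/- A graph is a threshold graph if and only if it contains no induced subgraph isomorphic to P4 (path on 4 vertices), C4 (cycle on 4 vertices), or 2K2 (two disjoint edges). -/
/-- A threshold graph: constructible from the one-vertex graph by repeatedly adding
an isolated vertex or a universal vertex. -/
def IsThreshold {V : Type*} (G : SimpleGraph V) : Prop :=
  ∃ (n : ℕ) (e : V ≃ Fin n), ∀ i : Fin n,
    (∀ j, j < i → ¬ G.Adj (e.symm j) (e.symm i)) ∨ (∀ j, j < i → G.Adj (e.symm j) (e.symm i))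

def twoKTwo : SimpleGraph (Fin 4) :=
  SimpleGraph.fromEdgeSet {s(0, 1), s(2, 3)}

/-!
Everything goes through the vicinal preorder `u ≼ v :↔ N(u) \ {v} ⊆ N(v)`.

If `v` is added after `u`, then towards the earlier vertices `v` is universal (so `u ≼ v`) or
isolated (so `v ≼ u`), while every later vertex sees `u` and `v` alike: in a threshold graph the
preorder is total. Conversely, when it is total a vertex `v` of maximum degree satisfies
`u ≼ v` for every `u`, so either `v` is universal or every non-neighbour of `v` is isolated;
deleting that vertex and inducting builds the ordering.

If `u` and `v` are incomparable, with private neighbours `a` of `u` and `b` of `v`, then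
`a, u, v, b` span a `C₄`, a `P₄` or a `2K₂` according as both, one or none of `uv`, `ab` are
edges. Since the preorder of an induced subgraph is total when that of the graph is, and `P₄`,
`C₄`, `2K₂` themselves are not totally preordered, totality is equivalent to excluding these three
graphs.
-/

namespace SimpleGraph

variable {V W : Type*} {G : SimpleGraph V} {H : SimpleGraph W}

def VicinalLE (G : SimpleGraph V) (u v : V) : Prop :=
  ∀ ⦃x⦄, G.Adj u x → x ≠ v → G.Adj v x

theorem Embedding.vicinalLE_of_map (f : H ↪g G) {u v : W} (h : G.VicinalLE (f u) (f v)) :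
    H.VicinalLE u v :=
  fun _ hux hxv => f.map_adj_iff.1 (h (f.map_adj_iff.2 hux) (f.injective.ne hxv))

theorem Embedding.total_vicinalLE (f : H ↪g G) (h : Std.Total G.VicinalLE) :
    Std.Total H.VicinalLE :=
  ⟨fun u v => (h.total (f u) (f v)).imp f.vicinalLE_of_map f.vicinalLE_of_map⟩

def Embedding.ofLTImpNe [LinearOrder W] (p : W → V) (hne : ∀ i j, i < j → p i ≠ p j)
    (hadj : ∀ i j, i < j → (G.Adj (p i) (p j) ↔ H.Adj i j)) : H ↪g G where
  toFun := p
  inj' := .of_lt_imp_ne hne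
  map_rel_iff' {i j} := by
    rcases lt_trichotomy i j with hij | rfl | hij
    · exact hadj i j hij
    · simp
    · exact (adj_comm _ _ _).trans ((hadj j i hij).trans (adj_comm _ _ _))

theorem VicinalLE.of_degree_le [G.LocallyFinite] {u v : V} (h : G.VicinalLE v u)
    (hdeg : G.degree u ≤ G.degree v) : G.VicinalLE u v := by
  classical
  have hsub : (G.neighborFinset v).erase u ⊆ (G.neighborFinset u).erase v := by
    intro x
    simp only [Finset.mem_erase, mem_neighborFinset]
    exact fun ⟨hxu, hvx⟩ => ⟨hvx.ne', h hvx hxu⟩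
  have hcard : ((G.neighborFinset u).erase v).card ≤ ((G.neighborFinset v).erase u).card := by
    by_cases huv : G.Adj u v
    · rw [Finset.card_erase_of_mem (by simpa using huv),
        Finset.card_erase_of_mem (by simpa using huv.symm)]
      simpa using Nat.sub_le_sub_right hdeg 1
    · rw [Finset.erase_eq_of_notMem (by simpa using huv),
        Finset.erase_eq_of_notMem (by simpa [G.adj_comm] using huv)]
      simpa using hdeg
  have heq := Finset.eq_of_subset_of_card_le hsub hcard
  intro x hux hxv
  have hx : x ∈ (G.neighborFinset u).erase v := by simp [hux, hxv]
  rw [← heq] at hx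
  simpa using Finset.mem_of_mem_erase hx

theorem exists_isolated_or_universal [Finite V] [Nonempty V] (h : Std.Total G.VicinalLE) :
    ∃ v, (∀ u, ¬ G.Adj u v) ∨ ∀ u ≠ v, G.Adj u v := by
  classical
  have := Fintype.ofFinite V
  obtain ⟨v, -, hmax⟩ :=
    Finset.exists_max_image Finset.univ (fun u => G.degree u) Finset.univ_nonempty
  have hle (u : V) : G.VicinalLE u v :=
    (h.total u v).elim id fun hvu => hvu.of_degree_le (hmax u (Finset.mem_univ u))
  by_cases huniv : ∀ u ≠ v, G.Adj u v
  · exact ⟨v, Or.inr huniv⟩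
  · push Not at huniv
    obtain ⟨w, hwv, hnwv⟩ := huniv
    exact ⟨w, Or.inl fun u huw => hnwv (hle u huw hwv).symm⟩

theorem not_total_vicinalLE_pathGraph : ¬ Std.Total (pathGraph 4).VicinalLE := fun h => by
  have := h.total 0 3
  simp only [VicinalLE, pathGraph_adj] at this
  revert this
  decide

theorem not_total_vicinalLE_cycleGraph : ¬ Std.Total (cycleGraph 4).VicinalLE := fun h => by
  have := h.total 0 3
  simp only [VicinalLE, cycleGraph_adj] at this
  revert this
  decide

theorem not_total_vicinalLE_twoKTwo : ¬ Std.Total twoKTwo.VicinalLE := fun h => by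
  have := h.total 0 3
  simp only [VicinalLE, twoKTwo, fromEdgeSet_adj] at this
  revert this
  decide

theorem total_vicinalLE_of_isEmpty_embedding (hP : IsEmpty (pathGraph 4 ↪g G))
    (hC : IsEmpty (cycleGraph 4 ↪g G)) (h2K : IsEmpty (twoKTwo ↪g G)) :
    Std.Total G.VicinalLE := by
  refine ⟨fun u v => ?_⟩
  by_contra! hnot
  obtain ⟨a, hua, hav, hva⟩ : ∃ a, G.Adj u a ∧ a ≠ v ∧ ¬ G.Adj v a := by
    simpa [VicinalLE] using hnot.1
  obtain ⟨b, hvb, hbu, hub⟩ : ∃ b, G.Adj v b ∧ b ≠ u ∧ ¬ G.Adj u b := by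
    simpa [VicinalLE] using hnot.2
  have hab : a ≠ b := by rintro rfl; exact hub hua
  have huv : u ≠ v := by rintro rfl; exact hva hua
  have hua' : u ≠ a := hua.ne
  have hvb' : v ≠ b := hvb.ne
  by_cases hadj_uv : G.Adj u v <;> by_cases hadj_ab : G.Adj a b
  · refine hC.false (.ofLTImpNe ![a, u, v, b] ?_ ?_) <;> intro i j hij <;> fin_cases i <;>
      fin_cases j <;> simp_all +decide [G.adj_comm, eq_comm]
  · refine hP.false (.ofLTImpNe ![a, u, v, b] ?_ ?_) <;> intro i j hij <;> fin_cases i <;>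
      fin_cases j <;> simp_all +decide [pathGraph_adj, G.adj_comm, eq_comm]
  · refine hP.false (.ofLTImpNe ![u, a, b, v] ?_ ?_) <;> intro i j hij <;> fin_cases i <;>
      fin_cases j <;> simp_all +decide [pathGraph_adj, G.adj_comm, eq_comm]
  · refine h2K.false (.ofLTImpNe ![a, u, v, b] ?_ ?_) <;> intro i j hij <;> fin_cases i <;>
      fin_cases j <;> simp_all +decide [twoKTwo, G.adj_comm, eq_comm]

end SimpleGraph

open SimpleGraph

section Threshold

variable {V : Type*} {G : SimpleGraph V}

theorem isThreshold_iff : IsThreshold G ↔ ∃ (n : ℕ) (e : V ≃ Fin n), ∀ v,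
    (∀ u, e u < e v → ¬ G.Adj u v) ∨ (∀ u, e u < e v → G.Adj u v) := by
  refine exists_congr fun n => exists_congr fun e => ?_
  simp only [e.symm.forall_congr_left, Equiv.symm_symm, Equiv.symm_apply_apply]

theorem adj_iff_adj_of_lt {n : ℕ} {e : V ≃ Fin n} {x : V}
    (hx : (∀ u, e u < e x → ¬ G.Adj u x) ∨ (∀ u, e u < e x → G.Adj u x)) {u w : V}
    (hu : e u < e x) (hw : e w < e x) : G.Adj u x ↔ G.Adj w x := by
  rcases hx with hx | hx
  · exact iff_of_false (hx u hu) (hx w hw)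
  · exact iff_of_true (hx u hu) (hx w hw)

theorem IsThreshold.total_vicinalLE (h : IsThreshold G) : Std.Total G.VicinalLE := by
  obtain ⟨n, e, he⟩ := isThreshold_iff.1 h
  refine ⟨fun u v => ?_⟩
  wlog huv : e u ≤ e v generalizing u v
  · exact (this v u (le_of_not_ge huv)).symm
  have hsame {x} (hxv : x ≠ v) (hnlt : ¬ e x < e v) : G.Adj u x ↔ G.Adj v x := by
    have hvx : e v < e x := lt_of_le_of_ne (not_lt.1 hnlt) (e.injective.ne hxv).symm
    simpa only [G.adj_comm _ x] using adj_iff_adj_of_lt (he x) (huv.trans_lt hvx) hvx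
  rcases he v with hiso | huniv
  · refine Or.inr fun x hvx _ => ?_
    have hxv : ¬ e x < e v := fun hlt => hiso x hlt hvx.symm
    exact (hsame hvx.ne' hxv).2 hvx
  · refine Or.inl fun x hux hxv => ?_
    by_cases hlt : e x < e v
    · exact (huniv x hlt).symm
    · exact (hsame hxv hlt).1 hux

theorem IsThreshold.of_induce_ne {v : V} (hv : (∀ u, ¬ G.Adj u v) ∨ ∀ u ≠ v, G.Adj u v)
    (h : IsThreshold (G.induce {u | u ≠ v})) : IsThreshold G := by
  classical
  obtain ⟨m, e', he'⟩ := isThreshold_iff.1 h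
  let e : V ≃ Fin (m + 1) :=
    ((Equiv.optionSubtypeNe v).symm.trans e'.optionCongr).trans finSuccEquivLast.symm
  have he_self : e v = Fin.last m := by simp [e]
  have he_ne (u : V) (hu : u ≠ v) : e u = (e' ⟨u, hu⟩).castSucc := by
    simp [e, Equiv.optionSubtypeNe_symm_of_ne hu]
  have hprev {u w : V} (hw : w ≠ v) (huw : e u < e w) :
      ∃ hu : u ≠ v, e' ⟨u, hu⟩ < e' ⟨w, hw⟩ := by
    have hu : u ≠ v := by
      rintro rfl
      exact (he_self ▸ huw).not_ge (Fin.le_last _)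
    exact ⟨hu, by simpa [he_ne u hu, he_ne w hw] using huw⟩
  refine isThreshold_iff.2 ⟨m + 1, e, fun w => ?_⟩
  by_cases hw : w = v
  · subst hw
    exact hv.imp (fun hiso u _ => hiso u) fun huniv u hu => huniv u (ne_of_apply_ne e hu.ne)
  · rcases he' ⟨w, hw⟩ with hiso | huniv
    · exact Or.inl fun u huw => let ⟨hu, hlt⟩ := hprev hw huw; hiso ⟨u, hu⟩ hlt
    · exact Or.inr fun u huw => let ⟨hu, hlt⟩ := hprev hw huw; huniv ⟨u, hu⟩ hlt

theorem isThreshold_of_total_vicinalLE [Finite V] (h : Std.Total G.VicinalLE) :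
    IsThreshold G := by
  induction hn : Nat.card V generalizing V with
  | zero =>
    have := Finite.card_eq_zero_iff.1 hn
    exact ⟨0, Equiv.equivOfIsEmpty V (Fin 0), finZeroElim⟩
  | succ n ih =>
    classical
    have : Nonempty V := Finite.card_pos_iff.1 (by omega)
    obtain ⟨v, hv⟩ := exists_isolated_or_universal h
    refine .of_induce_ne hv (ih ((Embedding.induce _).total_vicinalLE h) ?_)
    have hcard := Nat.card_congr (Equiv.optionSubtypeNe v)
    rw [Finite.card_option] at hcard
    exact Nat.succ_injective (hcard.trans hn)

theorem isThreshold_iff_total_vicinalLE [Finite V] : IsThreshold G ↔ Std.Total G.VicinalLE :=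
  ⟨IsThreshold.total_vicinalLE, isThreshold_of_total_vicinalLE⟩

end Threshold

/-- A finite graph is a threshold graph if and only if it has no induced subgraph
isomorphic to `P₄`, `C₄` or `2K₂`.  (Graph embeddings in Mathlib are induced:
they reflect adjacency.) -/
theorem isThreshold_iff_forbidden {V : Type*} [Fintype V] (G : SimpleGraph V) :
    IsThreshold G ↔
      IsEmpty (SimpleGraph.pathGraph 4 ↪g G) ∧
      IsEmpty (SimpleGraph.cycleGraph 4 ↪g G) ∧
      IsEmpty (twoKTwo ↪g G) := by
  rw [isThreshold_iff_total_vicinalLE]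
  refine ⟨fun h => ⟨?_, ?_, ?_⟩,
    fun ⟨hP, hC, h2K⟩ => total_vicinalLE_of_isEmpty_embedding hP hC h2K⟩
  · exact ⟨fun f => not_total_vicinalLE_pathGraph (f.total_vicinalLE h)⟩
  · exact ⟨fun f => not_total_vicinalLE_cycleGraph (f.total_vicinalLE h)⟩
  · exact ⟨fun f => not_total_vicinalLE_twoKTwo (f.total_vicinalLE h)⟩
end

section
/- If a graph G on n vertices has a set X of k vertices whose deletion leaves a connected threshold graph on at least two vertices, and G admits an equitable coloring with r colors, then n ≤ r(k + 2). -/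
/-!
In a threshold graph the vertex added last is isolated or universal; in a connected threshold
graph on at least two vertices it must be universal. A universal vertex `u` of `G - X` shares
its colour only with vertices of `X`, so its colour class has at most `k + 1` vertices, and by
equitability every colour class has at most `k + 2`.
-/

open Finset

namespace IsThreshold

variable {V : Type*} {G : SimpleGraph V}

theorem exists_isIsolated_or_isUniversal [Nonempty V] (h : IsThreshold G) :
    ∃ u, G.IsIsolated u ∨ G.IsUniversal u := by
  obtain ⟨n, e, he⟩ := h
  obtain _ | m := n
  · exact (e (Classical.arbitrary V)).elim0
  have lt_last {v : V} (hv : e.symm (Fin.last m) ≠ v) : e v < Fin.last m :=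
    Fin.lt_last_iff_ne_last.mpr fun hlast => hv (by rw [← hlast, e.symm_apply_apply])
  refine ⟨e.symm (Fin.last m),
    (he (Fin.last m)).imp (fun hiso v hadj => ?_) fun huniv v hv => ?_⟩
  · exact hiso (e v) (lt_last hadj.ne) (by simpa using hadj.symm)
  · simpa using (huniv (e v) (lt_last hv)).symm

theorem exists_isUniversal [Nontrivial V] (h : IsThreshold G) (hconn : G.Connected) :
    ∃ u, G.IsUniversal u := by
  obtain ⟨u, hiso | huniv⟩ := h.exists_isIsolated_or_isUniversal
  · exact absurd hiso (hconn.preconnected.not_isIsolated u)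
  · exact ⟨u, huniv⟩

end IsThreshold

theorem SimpleGraph.Coloring.card_filter_color_eq_le_of_forall_adj {V α : Type*} [Fintype V]
    [DecidableEq α] {G : SimpleGraph V} (C : G.Coloring α) (X : Finset V) {u : V}
    (hu : ∀ v ∉ X, u ≠ v → G.Adj u v) : #{v | C v = C u} ≤ #X + 1 := by
  classical
  have hsub : ({v | C v = C u} : Finset V) ⊆ insert u X := by
    intro v hv
    rw [mem_filter] at hv
    by_contra hvuX
    rw [mem_insert, not_or] at hvuX
    exact C.valid (hu v hvuX.2 (Ne.symm hvuX.1)) hv.2.symm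
  exact (card_le_card hsub).trans (card_insert_le u X)

theorem Fintype.card_le_mul_succ_of_card_fiber_le {α β : Type*} [Fintype α] [Fintype β]
    [DecidableEq β] (f : α → β) (b₀ : β) {m : ℕ} (hb₀ : #{a | f a = b₀} ≤ m)
    (hf : ∀ b, #{a | f a = b} ≤ #{a | f a = b₀} + 1) :
    Fintype.card α ≤ Fintype.card β * (m + 1) := by
  rw [mul_comm]
  exact card_le_mul_card_image_of_maps_to (fun a _ => mem_univ (f a)) (m + 1)
    fun b _ => (hf b).trans (by omega)

theorem card_le_of_equitable_general {V : Type*} [Fintype V]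
    (G : SimpleGraph V) (X : Finset V) (k : ℕ) (hX : X.card = k)
    (hthr : IsThreshold (G.induce ((↑X : Set V)ᶜ)))
    (hconn : (G.induce ((↑X : Set V)ᶜ)).Connected)
    (htwo : ∃ a b : ((↑X : Set V)ᶜ : Set V), a ≠ b)
    (r : ℕ) (C : G.Coloring (Fin r))
    (heq : ∀ c c' : Fin r,
      (univ.filter fun v => C v = c).card ≤ (univ.filter fun v => C v = c').card + 1) :
    Fintype.card V ≤ r * (k + 2) := by
  obtain ⟨a, b, hab⟩ := htwo
  have : Nontrivial ((↑X : Set V)ᶜ : Set V) := nontrivial_of_ne a b hab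
  obtain ⟨u, hu⟩ := hthr.exists_isUniversal hconn
  have hclass : #{v | C v = C u} ≤ k + 1 :=
    hX ▸ C.card_filter_color_eq_le_of_forall_adj X fun v hv huv =>
      hu (w := ⟨v, by simpa using hv⟩) fun h => huv (congrArg Subtype.val h)
  simpa using Fintype.card_le_mul_succ_of_card_fiber_le C (C u) hclass fun c => heq c (C u)

/-- If a graph `G` on `n` vertices has a set `X` of `k` vertices whose deletion leaves a
connected threshold graph on at least two vertices, and `G` admits an equitable coloring
with `r` colors, then `n ≤ r * (k + 2)`. -/
theorem card_le_of_equitable {V : Type*} [Fintype V] [DecidableEq V]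
    (G : SimpleGraph V) (X : Finset V) (k : ℕ) (hX : X.card = k)
    (hthr : IsThreshold (G.induce ((↑X : Set V)ᶜ)))
    (hconn : (G.induce ((↑X : Set V)ᶜ)).Connected)
    (htwo : ∃ a b : ((↑X : Set V)ᶜ : Set V), a ≠ b)
    (r : ℕ) (C : G.Coloring (Fin r))
    (heq : ∀ c c' : Fin r,
      (univ.filter fun v => C v = c).card ≤ (univ.filter fun v => C v = c').card + 1) :
    Fintype.card V ≤ r * (k + 2) :=
  card_le_of_equitable_general G X k hX hthr hconn htwo r C heq
end

section
/- Let G be a graph and let H be the split graph with clique vertices {c_v : v ∈ V(G)} and independent vertices {I_e : e ∈ E(G)}, where I_{uv} is adjacent to every clique vertex except c_u and c_v. Assign lists L(c_v) = {1,…,n} and L(I_e) = {k+1,…,n}, where n = |V(G)|. Then G has an independent set of size k if and only if H has a proper coloring φ with φ(x) ∈ L(x) for all vertices x of H. -/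
/-!
Color the clique vertices `c_v` bijectively with `1, …, n`. If `S` is independent of size `k`,
give `S` the colors `1, …, k`; every edge has an endpoint `w ∉ S`, and `I_e` may reuse the color
of `c_w`, since `I_e` is not adjacent to `c_w`. Conversely, in a list coloring the clique uses every
color of `{1, …, n}`, so the color of `I_e`, being at least `k + 1`, is the color of some `c_w`;
as `I_e` sees every `c_w` with `w ∉ e`, this `w` is an endpoint of `e`. Hence the `k` vertices
whose clique color is at most `k` span no edge.
-/

open Finset

/-- The reduction graph `H` built from a graph `G`: its vertices are the clique
vertices `c_v` (for `v ∈ V(G)`) and the independent vertices `I_e` (for `e ∈ E(G)`);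
the `c_v` form a clique, the `I_e` form an independent set, and `I_{uv}` is adjacent
to every clique vertex except `c_u` and `c_v`. -/
def redGraph {V : Type*} (G : SimpleGraph V) : SimpleGraph (V ⊕ G.edgeSet) :=
  SimpleGraph.fromRel fun a b =>
    match a, b with
    | Sum.inl u, Sum.inl v => u ≠ v
    | Sum.inl w, Sum.inr e => w ∉ (e : Sym2 V)
    | Sum.inr e, Sum.inl w => w ∉ (e : Sym2 V)
    | Sum.inr _, Sum.inr _ => False

section RedGraph

variable {V : Type*} {G : SimpleGraph V}

theorem redGraph_adj_inl_inl {u v : V} : (redGraph G).Adj (.inl u) (.inl v) ↔ u ≠ v := by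
  simp [redGraph, SimpleGraph.fromRel_adj, ne_comm]

theorem redGraph_adj_inl_inr {w : V} {e : G.edgeSet} :
    (redGraph G).Adj (.inl w) (.inr e) ↔ w ∉ (e : Sym2 V) := by
  simp [redGraph, SimpleGraph.fromRel_adj]

theorem redGraph_not_adj_inr_inr {e e' : G.edgeSet} : ¬ (redGraph G).Adj (.inr e) (.inr e') := by
  simp [redGraph, SimpleGraph.fromRel_adj]

def redGraphColoring {α : Type*} (g : V → α) (hg : g.Injective) (w : G.edgeSet → V)
    (hw : ∀ e : G.edgeSet, w e ∈ (e : Sym2 V)) : (redGraph G).Coloring α :=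
  SimpleGraph.Coloring.mk (Sum.elim g (g ∘ w)) <| by
    have key : ∀ v e, (redGraph G).Adj (.inl v) (.inr e) → g v ≠ g (w e) := fun v e hadj h =>
      redGraph_adj_inl_inr.mp hadj (by rw [hg h]; exact hw e)
    rintro (u | e) (v | e') hadj
    · exact hg.ne (redGraph_adj_inl_inl.mp hadj)
    · exact key u e' hadj
    · exact (key v e hadj.symm).symm
    · exact (redGraph_not_adj_inr_inr hadj).elim

theorem redGraph_coloring_inl_injective {α : Type*} (φ : (redGraph G).Coloring α) :
    (fun v => φ (.inl v)).Injective := fun _ _ h =>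
  not_ne_iff.mp fun hne => φ.valid (redGraph_adj_inl_inl.mpr hne) h

theorem redGraph_mem_of_coloring_inr_eq_inl {α : Type*} (φ : (redGraph G).Coloring α)
    {e : G.edgeSet} {w : V} (h : φ (.inr e) = φ (.inl w)) : w ∈ (e : Sym2 V) :=
  not_not.mp fun hw => φ.valid (redGraph_adj_inl_inr.mpr hw) h.symm

end RedGraph

theorem SimpleGraph.exists_mem_not_mem_of_isIndepSet {V : Type*} {G : SimpleGraph V} {S : Set V}
    (hS : G.IsIndepSet S) {e : Sym2 V} (he : e ∈ G.edgeSet) : ∃ w ∈ e, w ∉ S := by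
  induction e using Sym2.ind with
  | _ u v =>
    by_contra! h
    exact hS (h u (Sym2.mem_mk_left u v)) (h v (Sym2.mem_mk_right u v)) he.ne he

section Numbering

variable {V : Type*} [Fintype V]

theorem Finset.exists_injective_mem_Icc_le_card_iff_mem [DecidableEq V] (S : Finset V) :
    ∃ g : V → ℕ, g.Injective ∧ (∀ v, g v ∈ Icc 1 (Fintype.card V)) ∧ ∀ v, g v ≤ #S ↔ v ∈ S := by
  let e : V ≃ Fin (#S + Fintype.card {v // v ∉ S}) := (Equiv.sumCompl (· ∈ S)).symm.trans
    ((S.equivFin.sumCongr (Fintype.equivFin _)).trans finSumFinEquiv)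
  have hcard : Fintype.card V = #S + Fintype.card {v // v ∉ S} := by
    simpa using Fintype.card_congr e
  refine ⟨fun v => e v + 1, fun u v h => e.injective (Fin.ext (by simpa using h)),
    fun v => mem_Icc.mpr ⟨by simp, by rw [hcard]; exact (e v).isLt⟩, fun v => ?_⟩
  by_cases hv : v ∈ S <;> simp [e, hv]

theorem image_univ_eq_of_injective {α : Type*} [DecidableEq α] {g : V → α} (hg : g.Injective)
    {T : Finset α} (hT : ∀ v, g v ∈ T) (hcard : #T ≤ Fintype.card V) : univ.image g = T :=
  eq_of_subset_of_card_le (by simpa [subset_iff] using hT)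
    (by rwa [card_image_of_injective _ hg, card_univ])

theorem card_filter_le_of_injective_mem_Icc {g : V → ℕ} (hg : g.Injective)
    (hIcc : ∀ v, g v ∈ Icc 1 (Fintype.card V)) {k : ℕ} (hk : k ≤ Fintype.card V) :
    #{v | g v ≤ k} = k := by
  calc #{v | g v ≤ k} = #(({v | g v ≤ k} : Finset V).image g) := (card_image_of_injective _ hg).symm
    _ = #((univ.image g).filter (· ≤ k)) := by rw [filter_image]
    _ = #(Icc 1 k) := by
      rw [image_univ_eq_of_injective hg hIcc (by simp)]
      congr 1
      ext x
      simp only [mem_filter, mem_Icc]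
      omega
    _ = k := by simp

end Numbering

theorem redGraph_exists_mem_coloring_inl_eq_inr {V : Type*} [Fintype V] {G : SimpleGraph V}
    (φ : (redGraph G).Coloring ℕ) (hc : ∀ v, φ (.inl v) ∈ Icc 1 (Fintype.card V))
    {e : G.edgeSet} (he : φ (.inr e) ∈ Icc 1 (Fintype.card V)) :
    ∃ w ∈ (e : Sym2 V), φ (.inl w) = φ (.inr e) := by
  have hsurj := image_univ_eq_of_injective (redGraph_coloring_inl_injective φ) hc (by simp)
  obtain ⟨w, -, hw⟩ := mem_image.mp (hsurj ▸ he)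
  exact ⟨w, redGraph_mem_of_coloring_inr_eq_inl φ hw.symm, hw⟩

/-- With lists `L(c_v) = {1,…,n}` and `L(I_e) = {k+1,…,n}` (`n = |V(G)|`), the graph
`G` has an independent set of size `k` iff `H` has a proper list coloring. -/
theorem independentSet_iff_listColoring {V : Type*} [Fintype V] [DecidableEq V]
    (G : SimpleGraph V) (k : ℕ) (hk : k ≤ Fintype.card V) :
    (∃ S : Finset V, S.card = k ∧ (↑S : Set V).Pairwise fun a b => ¬ G.Adj a b) ↔
    (∃ φ : (redGraph G).Coloring ℕ,
      (∀ v : V, φ (Sum.inl v) ∈ Icc 1 (Fintype.card V)) ∧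
      (∀ e : G.edgeSet, φ (Sum.inr e) ∈ Icc (k + 1) (Fintype.card V))) := by
  constructor
  · rintro ⟨S, rfl, hS⟩
    obtain ⟨g, hg, hIcc, hgS⟩ := S.exists_injective_mem_Icc_le_card_iff_mem
    choose w hw hwS using fun e : G.edgeSet => G.exists_mem_not_mem_of_isIndepSet hS e.prop
    refine ⟨redGraphColoring g hg w hw, hIcc, fun e => ?_⟩
    have hgw := mem_Icc.mp (hIcc (w e))
    have hgw_gt := (hgS (w e)).not.mpr (hwS e)
    change g (w e) ∈ _
    exact mem_Icc.mpr ⟨by omega, hgw.2⟩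
  · rintro ⟨φ, hc, hi⟩
    refine ⟨({v | φ (.inl v) ≤ k} : Finset V),
      card_filter_le_of_injective_mem_Icc (redGraph_coloring_inl_injective φ) hc hk, ?_⟩
    intro u hu v hv _ hadj
    have he := mem_Icc.mp (hi ⟨s(u, v), hadj⟩)
    obtain ⟨w, hw, hφw⟩ :=
      redGraph_exists_mem_coloring_inl_eq_inr φ hc (mem_Icc.mpr ⟨by omega, he.2⟩)
    simp only [coe_filter, mem_univ, true_and, Set.mem_ofPred_eq] at hu hv
    rcases Sym2.mem_iff.mp hw with rfl | rfl <;> omega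
end

section
/- In the reduction graph H from the list-coloring NP-hardness proof: if X is an independent set of size k in G, then H admits a list coloring in which the vertices {c_v : v ∈ X} receive the colors 1,…,k, the remaining clique vertices receive distinct colors from {k+1,…,n}, and each I_{uv} receives the color of c_u or c_v for some endpoint not in X. -/
open Finset

/-!
Number the vertices of `G` so that `X` comes first and colour `c_v` by the number of `v`. An
independent set contains at most one endpoint of each edge, so every `I_{uv}` has an endpoint `w`
outside `X`; `c_w` is the only clique vertex with its colour and is not adjacent to `I_{uv}`, so
`I_{uv}` may copy that colour.
-/

theorem Finset.exists_equivFin_mem_iff_lt {V : Type*} [Fintype V] (X : Finset V) :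
    ∃ σ : V ≃ Fin (Fintype.card V), ∀ v, v ∈ X ↔ (σ v : ℕ) < #X := by
  classical
  have hcompl : Fintype.card {v // v ∉ X} = Fintype.card V - #X := by
    rw [Fintype.card_subtype_compl, Fintype.card_coe]
  let σ : V ≃ Fin (#X + (Fintype.card V - #X)) :=
    (Equiv.sumCompl (· ∈ X)).symm.trans
      ((X.equivFin.sumCongr (Fintype.equivFinOfCardEq hcompl)).trans finSumFinEquiv)
  refine ⟨σ.trans (finCongr (Nat.add_sub_cancel' X.card_le_univ)), fun v => ?_⟩
  by_cases hv : v ∈ X <;> simp [σ, hv, Equiv.sumCompl_symm_apply_of_pos,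
    Equiv.sumCompl_symm_apply_of_neg]

theorem SimpleGraph.exists_mem_notMem_of_isIndepSet {V : Type*} {G : SimpleGraph V} {X : Set V}
    (hX : G.IsIndepSet X) {e : Sym2 V} (he : e ∈ G.edgeSet) : ∃ w ∈ e, w ∉ X := by
  induction e using Sym2.ind with
  | _ u v =>
    by_contra! h
    exact hX (h u (Sym2.mem_mk_left u v)) (h v (Sym2.mem_mk_right u v)) (G.ne_of_adj he) he

namespace redGraph

variable {V : Type*} {G : SimpleGraph V}

@[simp]
theorem adj_inl_inl {u v : V} : (redGraph G).Adj (.inl u) (.inl v) ↔ u ≠ v := by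
  simp +contextual [redGraph]

@[simp]
theorem adj_inl_inr {w : V} {e : G.edgeSet} :
    (redGraph G).Adj (.inl w) (.inr e) ↔ w ∉ (e : Sym2 V) := by
  simp [redGraph]

@[simp]
theorem not_adj_inr_inr {e e' : G.edgeSet} : ¬ (redGraph G).Adj (.inr e) (.inr e') := by
  simp [redGraph]

def coloringOfEndpoint {α : Type*} (f : V → α) (hf : Function.Injective f)
    (sel : G.edgeSet → V) (hsel : ∀ e : G.edgeSet, sel e ∈ (e : Sym2 V)) :
    (redGraph G).Coloring α :=
  SimpleGraph.Coloring.mk (Sum.elim f (f ∘ sel)) <| by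
    have key : ∀ {w : V} {e : G.edgeSet},
        (redGraph G).Adj (.inl w) (.inr e) → f w ≠ f (sel e) :=
      fun h heq => adj_inl_inr.mp h (hf heq ▸ hsel _)
    rintro (u | e) (v | e') h
    · exact hf.ne (adj_inl_inl.mp h)
    · exact key h
    · exact (key h.symm).symm
    · exact absurd h not_adj_inr_inr

end redGraph

theorem listColoring_of_independentSet_general {V : Type*} [Fintype V]
    (G : SimpleGraph V) (k : ℕ) (X : Finset V) (hcard : X.card = k)
    (hX : (↑X : Set V).Pairwise fun a b => ¬ G.Adj a b) :
    ∃ φ : (redGraph G).Coloring ℕ,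
      (∀ v : V, φ (Sum.inl v) ∈ Icc 1 (Fintype.card V)) ∧
      (∀ e : G.edgeSet, φ (Sum.inr e) ∈ Icc (k + 1) (Fintype.card V)) ∧
      (∀ v ∈ X, φ (Sum.inl v) ∈ Icc 1 k) ∧
      (∀ v ∉ X, φ (Sum.inl v) ∈ Icc (k + 1) (Fintype.card V)) ∧
      (∀ u v : V, u ≠ v → φ (Sum.inl u) ≠ φ (Sum.inl v)) ∧
      (∀ e : G.edgeSet, ∃ w ∈ (e : Sym2 V), w ∉ X ∧ φ (Sum.inr e) = φ (Sum.inl w)) := by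
  obtain ⟨σ, hσ⟩ := X.exists_equivFin_mem_iff_lt
  subst hcard
  choose sel hsel hselX using fun e : G.edgeSet =>
    SimpleGraph.exists_mem_notMem_of_isIndepSet hX e.2
  have hf : Function.Injective fun v => (σ v : ℕ) + 1 :=
    fun u v h => σ.injective (Fin.ext (Nat.succ_injective h))
  have hbound v : (σ v : ℕ) < Fintype.card V := (σ v).isLt
  have hXc {v} (hv : v ∉ X) : (σ v : ℕ) + 1 ∈ Icc (#X + 1) (Fintype.card V) := by
    simp only [mem_Icc]; have := (hσ v).not.mp hv; have := hbound v; omega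
  refine ⟨redGraph.coloringOfEndpoint _ hf sel hsel, fun v => ?_, fun e => hXc (hselX e),
    fun v hv => ?_, fun v => hXc, fun u v huv => hf.ne huv,
    fun e => ⟨sel e, hsel e, hselX e, rfl⟩⟩
  · exact mem_Icc.mpr ⟨le_add_self, hbound v⟩
  · exact mem_Icc.mpr ⟨le_add_self, (hσ v).mp hv⟩

/-- If `X` is an independent set of size `k` in `G`, then `H` admits a proper list
coloring (lists `L(c_v) = [n]`, `L(I_e) = {k+1,…,n}`) in which the vertices `c_v`,
`v ∈ X`, receive the colors `1,…,k`, the remaining clique vertices receive distinct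
colors from `{k+1,…,n}`, and each `I_{uv}` receives the color of `c_w` for some
endpoint `w` of `uv` not in `X`. -/
theorem listColoring_of_independentSet {V : Type*} [Fintype V] [DecidableEq V]
    (G : SimpleGraph V) (k : ℕ) (X : Finset V) (hcard : X.card = k)
    (hX : (↑X : Set V).Pairwise fun a b => ¬ G.Adj a b) :
    ∃ φ : (redGraph G).Coloring ℕ,
      (∀ v : V, φ (Sum.inl v) ∈ Icc 1 (Fintype.card V)) ∧
      (∀ e : G.edgeSet, φ (Sum.inr e) ∈ Icc (k + 1) (Fintype.card V)) ∧
      (∀ v ∈ X, φ (Sum.inl v) ∈ Icc 1 k) ∧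
      (∀ v ∉ X, φ (Sum.inl v) ∈ Icc (k + 1) (Fintype.card V)) ∧
      (∀ u v : V, u ≠ v → φ (Sum.inl u) ≠ φ (Sum.inl v)) ∧
      (∀ e : G.edgeSet, ∃ w ∈ (e : Sym2 V), w ∉ X ∧ φ (Sum.inr e) = φ (Sum.inl w)) :=
  listColoring_of_independentSet_general G k X hcard hX
end

section
/- Let G be a graph with a set X ⊆ V(G) of size k such that G \ X is a clique C, and let f be a proper precoloring of a subset W ⊆ V(G) using colors [t]. If a vertex v ∈ X \ W has more than 2k colors in its admissible list L(v) = [t] \ f(N(v) ∩ W), and at least k of those colors are used on precolored clique vertices, then any proper partial coloring of G in which at most k vertices of X besides v are colored can be extended to color v from L(v). -/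
open Finset

/-!
The colors that a neighbor of `v` blocks inside the admissible list `L(v)` cannot come from
precolored vertices, since `L(v)` already avoids their colors; so they come from the at most `k`
colored vertices of `X` other than `v`, and `|L(v)| > 2k ≥ k` leaves a free color.
-/

theorem exists_mem_forall_ne_some_of_card_lt {α β : Type*} (L : Finset α) (S : Finset β)
    (c : β → Option α) (P : β → Prop) (hS : ∀ u, ∀ a ∈ L, P u → c u = some a → u ∈ S)
    (hcard : S.card < L.card) :
    ∃ a ∈ L, ∀ u, P u → c u ≠ some a := by
  classical
  have hlt : (S.image c).card < (L.map .some).card := by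
    rw [card_map]
    exact (card_image_le).trans_lt hcard
  obtain ⟨_, hmem, hnot⟩ := exists_mem_notMem_of_card_lt_card hlt
  obtain ⟨a, ha, rfl⟩ := mem_map.mp hmem
  exact ⟨a, ha, fun u hu hcu => hnot (mem_image.mpr ⟨u, hS u a ha hu hcu, hcu⟩)⟩

theorem mem_filter_isSome_erase_of_adj {V α : Type*} [DecidableEq V] {G : SimpleGraph V}
    {X W : Finset V} {f : V → α} {c : V → Option α} {v u : V} {a : α}
    (hcf : ∀ w ∈ W, c w = some (f w)) (hcv : c v = none)
    (hcdom : ∀ u : V, (c u).isSome → u ∈ W ∨ u ∈ X)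
    (ha : ∀ w ∈ W, G.Adj v w → f w ≠ a) (hadj : G.Adj v u) (hcu : c u = some a) :
    u ∈ (X.erase v).filter fun u => (c u).isSome := by
  have hsome : (c u).isSome := by simp [hcu]
  have huv : u ≠ v := by
    rintro rfl
    simp [hcv] at hcu
  rcases hcdom u hsome with huW | huX
  · exact absurd (Option.some_injective _ ((hcf u huW).symm.trans hcu)) (ha u huW hadj)
  · exact mem_filter.mpr ⟨mem_erase.mpr ⟨huv, huX⟩, hsome⟩

theorem greedy_color_modulator_vertex_general {V : Type*} [Fintype V] [DecidableEq V]
    (G : SimpleGraph V) [DecidableRel G.Adj]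
    (X : Finset V) (k : ℕ)
    (W : Finset V) (t : ℕ) (f : V → ℕ)
    (v : V)
    (hbig : 2 * k <
      ((Icc 1 t).filter fun a => ∀ w ∈ W, G.Adj v w → f w ≠ a).card)
    (c : V → Option ℕ)
    (hcf : ∀ w ∈ W, c w = some (f w))
    (hcv : c v = none)
    (hcdom : ∀ u : V, (c u).isSome → u ∈ W ∨ u ∈ X)
    (hcX : ((X.erase v).filter fun u => (c u).isSome).card ≤ k) :
    ∃ a ∈ (Icc 1 t).filter fun a => ∀ w ∈ W, G.Adj v w → f w ≠ a,
      ∀ u : V, G.Adj v u → c u ≠ some a :=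
  exists_mem_forall_ne_some_of_card_lt _ _ c (G.Adj v)
    (fun _ _ ha hadj hcu =>
      mem_filter_isSome_erase_of_adj hcf hcv hcdom (mem_filter.mp ha).2 hadj hcu)
    (by omega)

/-- Let `G` have a modulator `X` of size `k` to a clique (`G \ X` is a clique), and let
`f` be a proper precoloring of `W ⊆ V(G)` with colors from `[t]`.  Suppose a vertex
`v ∈ X \ W` has more than `2k` colors in its admissible list `L(v) = [t] \ f(N(v) ∩ W)`
and at least `k` of those colors are used on precolored clique vertices.  Then any
proper partial coloring of `G` extending `f` whose only colored vertices outside `W`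
lie in `X`, with at most `k` vertices of `X` besides `v` colored (and `v` uncolored),
can be extended by a color from `L(v)` at `v`. -/
theorem greedy_color_modulator_vertex {V : Type*} [Fintype V] [DecidableEq V]
    (G : SimpleGraph V) [DecidableRel G.Adj]
    (X : Finset V) (k : ℕ) (hk : X.card = k)
    (hclique : G.IsClique ((↑X : Set V)ᶜ))
    (W : Finset V) (t : ℕ) (f : V → ℕ)
    (hfcol : ∀ w ∈ W, f w ∈ Icc 1 t)
    (hfproper : ∀ a ∈ W, ∀ b ∈ W, G.Adj a b → f a ≠ f b)
    (v : V) (hvX : v ∈ X) (hvW : v ∉ W)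
    (hbig : 2 * k <
      ((Icc 1 t).filter fun a => ∀ w ∈ W, G.Adj v w → f w ≠ a).card)
    (hcliquecolors : k ≤
      (((Icc 1 t).filter fun a => ∀ w ∈ W, G.Adj v w → f w ≠ a).filter
        fun a => ∃ w ∈ W, w ∉ X ∧ f w = a).card)
    (c : V → Option ℕ)
    (hcf : ∀ w ∈ W, c w = some (f w))
    (hcv : c v = none)
    (hcdom : ∀ u : V, (c u).isSome → u ∈ W ∨ u ∈ X)
    (hcX : ((X.erase v).filter fun u => (c u).isSome).card ≤ k)
    (hcproper : ∀ a b : V, G.Adj a b → ∀ x : ℕ, c a = some x → c b ≠ some x) :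
    ∃ a ∈ (Icc 1 t).filter fun a => ∀ w ∈ W, G.Adj v w → f w ≠ a,
      ∀ u : V, G.Adj v u → c u ≠ some a :=
  greedy_color_modulator_vertex_general G X k W t f v hbig c hcf hcv hcdom hcX
end
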